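/- arXiv:1304.3389 — 2 statements merged into one kernel-verified Lean document; each statement's English description precedes it below -/
import Mathlib

section
/- For all complex numbers z, w ∈ ℂ, one has | |z|^{-(1-m)} z − |w|^{-(1-m)} w | ≤ 5 |z − w|^m, where 0 < m < 1 and the map is extended by 0 at the origin. -/
/-!
Write `f x = ‖x‖ ^ (m - 1) • x`, so that `‖f x‖ = ‖x‖ ^ m`, and let `‖y‖ ≤ ‖x‖` and `d = ‖x - y‖`.
If `‖y‖ ≤ d`, the crude bound `‖f x‖ + ‖f y‖ ≤ (‖y‖ + d) ^ m + ‖y‖ ^ m ≤ 3 d ^ m` suffices, by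
subadditivity of `t ↦ t ^ m`. If `d < ‖y‖`, split
`f x - f y = ‖x‖ ^ (m - 1) • (x - y) + (‖x‖ ^ (m - 1) - ‖y‖ ^ (m - 1)) • y`:
as `t ↦ t ^ (m - 1)` is decreasing and `d < ‖y‖ ≤ ‖x‖`, each term has norm at most `d ^ m`.
-/

open Real

section Scalar

variable {m a b : ℝ}

lemma Real.rpow_sub_one_mul_self (hm : m ≠ 0) (ha : 0 ≤ a) : a ^ (m - 1) * a = a ^ m := by
  rw [← rpow_add_one' ha (by simpa using hm), sub_add_cancel]

lemma Real.rpow_sub_one_mul_le_rpow (hm0 : m ≠ 0) (hm1 : m ≤ 1) (hb : 0 ≤ b) (hba : b ≤ a) :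
    a ^ (m - 1) * b ≤ b ^ m := by
  rcases hb.eq_or_lt with rfl | hb
  · simpa using rpow_nonneg le_rfl m
  calc a ^ (m - 1) * b ≤ b ^ (m - 1) * b :=
        mul_le_mul_of_nonneg_right (rpow_le_rpow_of_nonpos hb hba (by linarith)) hb.le
    _ = b ^ m := rpow_sub_one_mul_self hm0 hb.le

lemma Real.rpow_sub_one_sub_rpow_sub_one_mul_le (hm0 : 0 < m) (hb : 0 < b) (hba : b ≤ a) :
    (b ^ (m - 1) - a ^ (m - 1)) * b ≤ b ^ (m - 1) * (a - b) := by
  have ha : 0 < a := hb.trans_le hba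
  have hpow : b ^ (m - 1) * b ≤ a ^ (m - 1) * a := by
    rw [rpow_sub_one_mul_self hm0.ne' hb.le, rpow_sub_one_mul_self hm0.ne' ha.le]
    exact rpow_le_rpow hb.le hba hm0.le
  -- after multiplying by `a`, `hpow` reduces the claim to `b ^ (m - 1) * (a - b) ^ 2 ≥ 0`
  refine le_of_mul_le_mul_left ?_ ha
  nlinarith [mul_le_mul_of_nonneg_right hpow hb.le,
    mul_nonneg (rpow_nonneg hb.le (m - 1)) (sq_nonneg (a - b))]

end Scalar

section Holder

variable {E : Type*} [SeminormedAddCommGroup E] [NormedSpace ℝ E] {m : ℝ}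

lemma norm_rpow_sub_one_smul (hm : m ≠ 0) (x : E) : ‖‖x‖ ^ (m - 1) • x‖ = ‖x‖ ^ m := by
  rw [norm_smul_of_nonneg (rpow_nonneg (norm_nonneg x) _),
    rpow_sub_one_mul_self hm (norm_nonneg x)]

lemma norm_rpow_sub_one_smul_sub_le_of_norm_le_norm_sub (hm0 : 0 < m) (hm1 : m ≤ 1) {x y : E}
    (hy : ‖y‖ ≤ ‖x - y‖) :
    ‖‖x‖ ^ (m - 1) • x - ‖y‖ ^ (m - 1) • y‖ ≤ 3 * ‖x - y‖ ^ m := by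
  have hx : ‖x‖ ≤ ‖y‖ + ‖x - y‖ := norm_le_norm_add_norm_sub' x y
  calc ‖‖x‖ ^ (m - 1) • x - ‖y‖ ^ (m - 1) • y‖ ≤ ‖x‖ ^ m + ‖y‖ ^ m := by
        rw [← norm_rpow_sub_one_smul hm0.ne' x, ← norm_rpow_sub_one_smul hm0.ne' y]
        exact norm_sub_le _ _
    _ ≤ (‖y‖ + ‖x - y‖) ^ m + ‖y‖ ^ m := by gcongr
    _ ≤ (‖y‖ ^ m + ‖x - y‖ ^ m) + ‖y‖ ^ m := by
        gcongr
        exact rpow_add_le_add_rpow (norm_nonneg _) (norm_nonneg _) hm0.le hm1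
    _ ≤ 3 * ‖x - y‖ ^ m := by
        have := rpow_le_rpow (norm_nonneg y) hy hm0.le
        linarith

lemma norm_rpow_sub_one_smul_sub_le_of_norm_sub_lt (hm0 : 0 < m) (hm1 : m ≤ 1) {x y : E}
    (hyx : ‖y‖ ≤ ‖x‖) (hd : ‖x - y‖ < ‖y‖) :
    ‖‖x‖ ^ (m - 1) • x - ‖y‖ ^ (m - 1) • y‖ ≤ 2 * ‖x - y‖ ^ m := by
  have hb : 0 < ‖y‖ := (norm_nonneg _).trans_lt hd
  have hsplit : ‖x‖ ^ (m - 1) • x - ‖y‖ ^ (m - 1) • y =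
      ‖x‖ ^ (m - 1) • (x - y) + (‖x‖ ^ (m - 1) - ‖y‖ ^ (m - 1)) • y := by
    rw [smul_sub, sub_smul]; abel
  have hcoeff : ‖x‖ ^ (m - 1) ≤ ‖y‖ ^ (m - 1) := rpow_le_rpow_of_nonpos hb hyx (by linarith)
  calc ‖‖x‖ ^ (m - 1) • x - ‖y‖ ^ (m - 1) • y‖
      ≤ ‖x‖ ^ (m - 1) * ‖x - y‖ + (‖y‖ ^ (m - 1) - ‖x‖ ^ (m - 1)) * ‖y‖ := by
        rw [hsplit, ← neg_sub (‖y‖ ^ (m - 1)), neg_smul, ← sub_eq_add_neg]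
        refine (norm_sub_le _ _).trans_eq ?_
        rw [norm_smul_of_nonneg (rpow_nonneg (norm_nonneg _) _),
          norm_smul_of_nonneg (sub_nonneg.2 hcoeff)]
    _ ≤ ‖x‖ ^ (m - 1) * ‖x - y‖ + ‖y‖ ^ (m - 1) * (‖x‖ - ‖y‖) := by
        linarith [rpow_sub_one_sub_rpow_sub_one_mul_le hm0 hb hyx]
    _ ≤ ‖x‖ ^ (m - 1) * ‖x - y‖ + ‖y‖ ^ (m - 1) * ‖x - y‖ := by
        gcongr
        exact norm_sub_norm_le x y
    _ ≤ ‖x - y‖ ^ m + ‖x - y‖ ^ m := by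
        gcongr <;> apply rpow_sub_one_mul_le_rpow hm0.ne' hm1 (norm_nonneg _) <;> linarith
    _ = 2 * ‖x - y‖ ^ m := by ring

theorem norm_rpow_sub_one_smul_sub_rpow_sub_one_smul_le (hm0 : 0 < m) (hm1 : m ≤ 1) (x y : E) :
    ‖‖x‖ ^ (m - 1) • x - ‖y‖ ^ (m - 1) • y‖ ≤ 3 * ‖x - y‖ ^ m := by
  wlog hyx : ‖y‖ ≤ ‖x‖ generalizing x y
  · rw [norm_sub_rev, norm_sub_rev x]
    exact this y x (le_of_not_ge hyx)
  rcases le_or_gt ‖y‖ ‖x - y‖ with hfar | hnear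
  · exact norm_rpow_sub_one_smul_sub_le_of_norm_le_norm_sub hm0 hm1 hfar
  · calc _ ≤ 2 * ‖x - y‖ ^ m := norm_rpow_sub_one_smul_sub_le_of_norm_sub_lt hm0 hm1 hyx hnear
      _ ≤ 3 * ‖x - y‖ ^ m := by gcongr; norm_num

end Holder

/-- Hölder estimate for the nonlinearity: `| |z|^{m-1}z - |w|^{m-1}w | ≤ 5 |z-w|^m`
for `0 < m < 1` (the map extended by `0` at the origin). -/
theorem stmt5 (m : ℝ) (hm0 : 0 < m) (hm1 : m < 1) (z w : ℂ) :
    ‖(‖z‖ ^ (m - 1) : ℝ) * z - (‖w‖ ^ (m - 1) : ℝ) * w‖ ≤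
      5 * ‖z - w‖ ^ m := by
  calc ‖(‖z‖ ^ (m - 1) : ℝ) * z - (‖w‖ ^ (m - 1) : ℝ) * w‖
      = ‖‖z‖ ^ (m - 1) • z - ‖w‖ ^ (m - 1) • w‖ := by simp only [Complex.real_smul]
    _ ≤ 3 * ‖z - w‖ ^ m := norm_rpow_sub_one_smul_sub_rpow_sub_one_smul_le hm0 hm1.le z w
    _ ≤ 5 * ‖z - w‖ ^ m := by gcongr; norm_num
end

section
/- Let (a,b) ∈ 𝔸 × 𝔸 satisfy condition (ab). Then there exist constants δ⋆ ∈ (0,1], L > 0 and M > 0, depending only on |a| and |b|, with the following property: for every δ ∈ [0, δ⋆] and all nonnegative reals C₀, C₁, C₂, C₃, C₄ satisfying |C₁ + δ·C₂ + Re(a)·C₃ + (Re(b) − δ)·C₄| ≤ C₀ and |Im(a)·C₃ + Im(b)·C₄| ≤ C₀, one has 0 ≤ C₁ + L·C₃ + L·C₄ ≤ M·C₀. -/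
/-!
The key point is a real `β` for which the linear form `z ↦ Re z + β Im z` is positive at both `a`
and `b`: a point of the slit plane with `Im z ≥ 0` (resp. `≤ 0`) is positive for all large
(resp. small) `β`, and when `Im a`, `Im b` have opposite signs, condition (ab) says exactly that
the two admissible half-lines of `β` overlap. Adding `β` times the second estimate to the first
then dominates `C₁ + L C₃ + L C₄` for `L = min (Re a + β Im a) ((Re b + β Im b) / 2)`.
-/

open Filter

lemma eventually_atTop_pos_add_mul {x y : ℝ} (h : ¬(x ≤ 0 ∧ y = 0)) (hy : 0 ≤ y) :
    ∀ᶠ β in atTop, 0 < x + β * y := by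
  rcases hy.eq_or_lt with rfl | hy
  · exact Eventually.of_forall fun β => by simpa using h
  · exact (tendsto_atTop_add_const_left _ x (tendsto_id.atTop_mul_const hy)).eventually_gt_atTop 0

lemma eventually_atBot_pos_add_mul {x y : ℝ} (h : ¬(x ≤ 0 ∧ y = 0)) (hy : y ≤ 0) :
    ∀ᶠ β in atBot, 0 < x + β * y := by
  have h' : ¬(x ≤ 0 ∧ -y = 0) := by rwa [neg_eq_zero]
  filter_upwards [tendsto_neg_atBot_atTop.eventually
    (eventually_atTop_pos_add_mul h' (neg_nonneg.mpr hy))] with β hβ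
  linarith

lemma exists_pos_re_add_mul_im {a b : ℂ}
    (ha : ¬(a.re ≤ 0 ∧ a.im = 0)) (hb : ¬(b.re ≤ 0 ∧ b.im = 0))
    (hab : a.im * b.im ≥ 0 ∨ (a.im * b.im < 0 ∧ b.re > b.im / a.im * a.re)) :
    ∃ β : ℝ, 0 < a.re + β * a.im ∧ 0 < b.re + β * b.im := by
  rcases hab with hsame | ⟨hopp, hcond⟩
  · rcases mul_nonneg_iff.mp hsame with ⟨hai, hbi⟩ | ⟨hai, hbi⟩
    · exact ((eventually_atTop_pos_add_mul ha hai).and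
        (eventually_atTop_pos_add_mul hb hbi)).exists
    · exact ((eventually_atBot_pos_add_mul ha hai).and
        (eventually_atBot_pos_add_mul hb hbi)).exists
  · have hai : a.im ≠ 0 := left_ne_zero_of_mul hopp.ne
    have hbi : b.im ≠ 0 := right_ne_zero_of_mul hopp.ne
    have hc : 0 < b.re - b.im / a.im * a.re := sub_pos.mpr hcond
    have hratio : a.im / b.im < 0 := by
      have := div_neg_of_neg_of_pos hopp (mul_self_pos.mpr hbi)
      rwa [mul_div_mul_right _ _ hbi] at this
    -- the midpoint of the two roots `-Re a / Im a` and `-Re b / Im b`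
    refine ⟨-(a.re / a.im + b.re / b.im) / 2, ?_, ?_⟩
    · have : a.re + -(a.re / a.im + b.re / b.im) / 2 * a.im
          = -(a.im / b.im) * (b.re - b.im / a.im * a.re) / 2 := by
        field_simp; ring
      rw [this]
      exact div_pos (mul_pos (neg_pos.mpr hratio) hc) two_pos
    · have : b.re + -(a.re / a.im + b.re / b.im) / 2 * b.im
          = (b.re - b.im / a.im * a.re) / 2 := by
        field_simp; ring
      rw [this]
      exact half_pos hc

lemma add_mul_le_of_abs_le {s t c : ℝ} (β : ℝ) (hs : |s| ≤ c) (ht : |t| ≤ c) :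
    s + β * t ≤ (1 + |β|) * c := by
  have hβt : β * t ≤ |β| * c :=
    calc β * t ≤ |β * t| := le_abs_self _
      _ = |β| * |t| := abs_mul β t
      _ ≤ |β| * c := mul_le_mul_of_nonneg_left ht (abs_nonneg β)
  linarith [le_abs_self s]

/-- Lemma (lemAB): if `(a,b) ∈ 𝔸²` satisfies condition (ab), there exist
`δ⋆ ∈ (0,1]`, `L > 0`, `M > 0` such that the two linear estimates imply
`0 ≤ C₁ + L C₃ + L C₄ ≤ M C₀`. -/
theorem stmt7 (a b : ℂ)
    (ha : ¬(a.re ≤ 0 ∧ a.im = 0)) (hb : ¬(b.re ≤ 0 ∧ b.im = 0))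
    (hab : a.im * b.im ≥ 0 ∨ (a.im * b.im < 0 ∧ b.re > b.im / a.im * a.re)) :
    ∃ δstar : ℝ, δstar ∈ Set.Ioc (0 : ℝ) 1 ∧ ∃ L : ℝ, 0 < L ∧ ∃ M : ℝ, 0 < M ∧
      ∀ δ : ℝ, δ ∈ Set.Icc 0 δstar →
      ∀ C₀ C₁ C₂ C₃ C₄ : ℝ, 0 ≤ C₀ → 0 ≤ C₁ → 0 ≤ C₂ → 0 ≤ C₃ → 0 ≤ C₄ →
        |C₁ + δ * C₂ + a.re * C₃ + (b.re - δ) * C₄| ≤ C₀ →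
        |a.im * C₃ + b.im * C₄| ≤ C₀ →
        0 ≤ C₁ + L * C₃ + L * C₄ ∧ C₁ + L * C₃ + L * C₄ ≤ M * C₀ := by
  obtain ⟨β, hLa, hLb⟩ := exists_pos_re_add_mul_im ha hb hab
  set La := a.re + β * a.im
  set Lb := b.re + β * b.im
  have hL : 0 < min La (Lb / 2) := lt_min hLa (half_pos hLb)
  refine ⟨min 1 (Lb / 2), ⟨lt_min one_pos (half_pos hLb), min_le_left _ _⟩,
    min La (Lb / 2), hL, 1 + |β|, by positivity, ?_⟩
  rintro δ ⟨hδ₀, hδ⟩ C₀ C₁ C₂ C₃ C₄ - h₁ h₂ h₃ h₄ hE₁ hE₂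
  have hL₃ : min La (Lb / 2) * C₃ ≤ La * C₃ := mul_le_mul_of_nonneg_right (min_le_left _ _) h₃
  have hL₄ : min La (Lb / 2) * C₄ ≤ (Lb - δ) * C₄ := mul_le_mul_of_nonneg_right
    (by linarith [min_le_right La (Lb / 2), hδ.trans (min_le_right 1 (Lb / 2))]) h₄
  refine ⟨by positivity, ?_⟩
  calc C₁ + min La (Lb / 2) * C₃ + min La (Lb / 2) * C₄
      ≤ (C₁ + δ * C₂ + a.re * C₃ + (b.re - δ) * C₄) + β * (a.im * C₃ + b.im * C₄) := by
        linarith [mul_nonneg hδ₀ h₂]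
    _ ≤ (1 + |β|) * C₀ := add_mul_le_of_abs_le β hE₁ hE₂
end
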